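/- arXiv:quant-ph/0412071 — 3 statements merged into one kernel-verified Lean document; each statement's English description precedes it below -/
import Mathlib

section
/- Let d ≥ 1 be an integer and let G = (V, E) be a finite simple graph with nonempty vertex set. If G has a nonempty evenly seen set D with |D| = d, then δ_loc(G) ≤ d − 1. -/
open SimpleGraph

variable {V : Type*}

/-- Local complementation of `G` at the vertex `v`: adjacency among the
neighbors of `v` is complemented, i.e. the edge set is `E Δ K_v`. -/
def localComp (G : SimpleGraph V) (v : V) : SimpleGraph V where
  Adj u w := u ≠ w ∧ ¬ (G.Adj u w ↔ (G.Adj v u ∧ G.Adj v w))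
  symm := by
    constructor
    intro u w h
    refine ⟨h.1.symm, ?_⟩
    have h1 := G.adj_comm u w
    have h2 := h.2
    tauto
  loopless := by
    constructor
    intro u h
    exact h.1 rfl

/-- The minimal vertex degree `δ(G)` of a graph. -/
noncomputable def minDegree (G : SimpleGraph V) : ℕ :=
  sInf (Set.range fun v => (G.neighborSet v).ncard)

/-- The minimal degree under local complementation `δ_loc(G)`: the minimum of
`δ(G')` over all graphs `G'` obtainable from `G` by a finite sequence of
local complementations. -/
noncomputable def minDegreeLoc (G : SimpleGraph V) : ℕ :=
  sInf {n | ∃ l : List V, minDegree (l.foldl localComp G) = n}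

/-- `D` is an evenly seen set if every vertex outside `D` has an even number
of neighbors in `D`. -/
def EvenlySeen (G : SimpleGraph V) (D : Set V) : Prop :=
  ∀ u ∉ D, Even ((G.neighborSet u ∩ D).ncard)

/-- A nonempty set `K` is `d`-locally evenly seen if there is a set `D` with
`K ⊆ D ⊆ V` and `|D| = d` such that every vertex outside `D` has an even
number of neighbors in `K`. -/
def LocallyEvenlySeen (G : SimpleGraph V) (d : ℕ) (K : Set V) : Prop :=
  K.Nonempty ∧ ∃ D : Set V, K ⊆ D ∧ D.ncard = d ∧
    ∀ u ∉ D, Even ((G.neighborSet u ∩ K).ncard)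

/- Induct on `|K|` for a nonempty `K ⊆ D` that every vertex outside `D` sees evenly, starting
from `K = D`. If some `v ∈ K` has all its neighbours in `D`, then `deg v ≤ |D| - 1`. Otherwise,
if some `v ∈ K` sees `K` oddly, then after local complementation at `v` the set `K \ {v}` is
still seen evenly from outside `D` (the parity seen by `w ~ v` changes by `|N(v) ∩ K| - 1`).
If every `v ∈ K` sees `K` evenly, take a neighbour `u ∉ D` of some `v ∈ K`: complementing at
`u` keeps `K` evenly seen from outside `D` and makes `v` see `K` oddly. -/

open symmDiff

theorem Set.ncard_symmDiff_add_two_mul_ncard_inter {α : Type*} {s t : Set α} (hs : s.Finite)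
    (ht : t.Finite) : (s ∆ t).ncard + 2 * (s ∩ t).ncard = s.ncard + t.ncard := by
  have hsdiff := Set.ncard_sdiff_add_ncard_of_subset (s := s ∩ t) (t := s ∪ t)
    (Set.inter_subset_left.trans Set.subset_union_left) (hs.union ht)
  have hunion := Set.ncard_union_add_ncard_inter s t hs ht
  rw [symmDiff_eq_sup_sdiff_inf]
  change ((s ∪ t) \ (s ∩ t)).ncard + _ = _
  omega

theorem Set.even_ncard_symmDiff_iff {α : Type*} {s t : Set α} (hs : s.Finite) (ht : t.Finite) :
    Even (s ∆ t).ncard ↔ (Even s.ncard ↔ Even t.ncard) := by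
  rw [← Nat.even_add, ← Set.ncard_symmDiff_add_two_mul_ncard_inter hs ht, Nat.even_add]
  simp

section LocalComplementation

variable (G : SimpleGraph V) {u w : V}

theorem localComp_neighborSet_of_not_adj (h : ¬ G.Adj u w) :
    (localComp G u).neighborSet w = G.neighborSet w := by
  ext x
  simp only [mem_neighborSet, localComp]
  exact ⟨fun hx => by tauto, fun hx => ⟨hx.ne, by tauto⟩⟩

theorem localComp_neighborSet_of_adj (h : G.Adj u w) :
    (localComp G u).neighborSet w = (G.neighborSet w ∆ G.neighborSet u) \ {w} := by
  ext x
  simp only [mem_neighborSet, localComp, Set.mem_sdiff, Set.mem_symmDiff, Set.mem_singleton_iff]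
  exact ⟨fun hx => ⟨by tauto, fun hxw => hx.1 hxw.symm⟩,
    fun hx => ⟨fun hwx => hx.2 hwx.symm, by tauto⟩⟩

theorem localComp_neighborSet_inter_of_adj (h : G.Adj u w) (S : Set V) :
    (localComp G u).neighborSet w ∩ S =
      ((G.neighborSet w ∩ S) ∆ (G.neighborSet u ∩ S)) \ {w} := by
  rw [localComp_neighborSet_of_adj G h, ← Set.inter_sdiff_right_comm,
    Set.inter_symmDiff_distrib_right]

variable [Finite V] {S : Set V}

theorem even_ncard_localComp_neighborSet_inter_of_notMem (h : G.Adj u w) (hw : w ∉ S) :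
    Even ((localComp G u).neighborSet w ∩ S).ncard ↔
      (Even (G.neighborSet w ∩ S).ncard ↔ Even (G.neighborSet u ∩ S).ncard) := by
  rw [localComp_neighborSet_inter_of_adj G h, Set.sdiff_singleton_eq_self,
    Set.even_ncard_symmDiff_iff (Set.toFinite _) (Set.toFinite _)]
  rintro (⟨⟨-, hwS⟩, -⟩ | ⟨⟨-, hwS⟩, -⟩) <;> exact hw hwS

theorem even_ncard_localComp_neighborSet_inter_of_mem (h : G.Adj u w) (hw : w ∈ S) :
    Even ((localComp G u).neighborSet w ∩ S).ncard ↔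
      ¬ (Even (G.neighborSet w ∩ S).ncard ↔ Even (G.neighborSet u ∩ S).ncard) := by
  have hw' : w ∈ (G.neighborSet w ∩ S) ∆ (G.neighborSet u ∩ S) :=
    Or.inr ⟨⟨h, hw⟩, fun hww => G.notMem_neighborSet_self hww.1⟩
  rw [← Set.even_ncard_symmDiff_iff (Set.toFinite _) (Set.toFinite _),
    ← Set.ncard_sdiff_singleton_add_one hw', localComp_neighborSet_inter_of_adj G h,
    Nat.even_add_one, not_not]

end LocalComplementation

section MinDegree

variable (G : SimpleGraph V)

theorem minDegree_le_ncard_neighborSet (v : V) : minDegree G ≤ (G.neighborSet v).ncard :=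
  Nat.sInf_le ⟨v, rfl⟩

theorem minDegreeLoc_le_minDegree : minDegreeLoc G ≤ minDegree G :=
  Nat.sInf_le ⟨[], rfl⟩

theorem minDegreeLoc_le_minDegreeLoc_localComp (v : V) :
    minDegreeLoc G ≤ minDegreeLoc (localComp G v) := by
  obtain ⟨l, hl⟩ := Nat.sInf_mem (⟨_, [], rfl⟩ :
    {n | ∃ l : List V, minDegree (l.foldl localComp (localComp G v)) = n}.Nonempty)
  exact Nat.sInf_le ⟨v :: l, hl⟩

theorem minDegreeLoc_le_ncard_sub_one_of_neighborSet_subset [Finite V] {D : Set V} {v : V}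
    (hv : v ∈ D) (h : G.neighborSet v ⊆ D) : minDegreeLoc G ≤ D.ncard - 1 := by
  have hsub : G.neighborSet v ⊆ D \ {v} := fun x hx => ⟨h hx, hx.ne'⟩
  calc minDegreeLoc G ≤ (G.neighborSet v).ncard :=
        (minDegreeLoc_le_minDegree G).trans (minDegree_le_ncard_neighborSet G v)
    _ ≤ (D \ {v}).ncard := Set.ncard_le_ncard hsub
    _ = D.ncard - 1 := Set.ncard_sdiff_singleton_of_mem hv

end MinDegree

def SeenEvenlyOutside (G : SimpleGraph V) (K D : Set V) : Prop :=
  ∀ w ∉ D, Even (G.neighborSet w ∩ K).ncard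

namespace SeenEvenlyOutside

variable [Finite V] {G : SimpleGraph V} {K D : Set V}

theorem localComp_of_notMem (h : SeenEvenlyOutside G K D) (hKD : K ⊆ D) {u : V} (hu : u ∉ D) :
    SeenEvenlyOutside (localComp G u) K D := by
  intro w hw
  by_cases huw : G.Adj u w
  · rw [even_ncard_localComp_neighborSet_inter_of_notMem G huw fun hwK => hw (hKD hwK)]
    exact iff_of_true (h w hw) (h u hu)
  · rw [localComp_neighborSet_of_not_adj G huw]
    exact h w hw

theorem localComp_sdiff_singleton (h : SeenEvenlyOutside G K D) (hKD : K ⊆ D) {v : V}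
    (hv : v ∈ K) (hodd : ¬ Even (G.neighborSet v ∩ K).ncard) :
    SeenEvenlyOutside (localComp G v) (K \ {v}) D := by
  intro w hw
  have hwK : w ∉ K \ {v} := fun hw' => hw (hKD hw'.1)
  by_cases hvw : G.Adj v w
  · have hw_odd : ¬ Even (G.neighborSet w ∩ (K \ {v})).ncard := by
      rw [← Set.inter_sdiff_assoc, ← Nat.even_add_one,
        Set.ncard_sdiff_singleton_add_one (s := G.neighborSet w ∩ K) ⟨hvw.symm, hv⟩]
      exact h w hw
    have hv_eq : G.neighborSet v ∩ (K \ {v}) = G.neighborSet v ∩ K := by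
      rw [← Set.inter_sdiff_assoc,
        Set.sdiff_singleton_eq_self fun hvv => G.notMem_neighborSet_self hvv.1]
    rw [even_ncard_localComp_neighborSet_inter_of_notMem G hvw hwK, hv_eq]
    exact iff_of_false hw_odd hodd
  · rw [localComp_neighborSet_of_not_adj G hvw, ← Set.inter_sdiff_assoc,
      Set.sdiff_singleton_eq_self fun hvN => hvw (G.adj_symm hvN.1)]
    exact h w hw

end SeenEvenlyOutside

theorem nonempty_sdiff_singleton_of_not_even_ncard_neighborSet_inter {G : SimpleGraph V}
    {K : Set V} {v : V} (hodd : ¬ Even (G.neighborSet v ∩ K).ncard) : (K \ {v}).Nonempty := by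
  obtain ⟨x, hxv, hxK⟩ := Set.nonempty_of_ncard_ne_zero fun h0 => hodd (h0 ▸ Even.zero)
  exact ⟨x, hxK, hxv.ne'⟩

theorem minDegreeLoc_le_ncard_sub_one_of_seenEvenlyOutside [Finite V] {G : SimpleGraph V}
    {K D : Set V} (hK : K.Nonempty) (hKD : K ⊆ D) (h : SeenEvenlyOutside G K D) :
    minDegreeLoc G ≤ D.ncard - 1 := by
  induction hn : K.ncard generalizing G K with
  | zero => exact absurd hn hK.ncard_pos.ne'
  | succ n ih =>
    have remove_odd : ∀ {G' : SimpleGraph V}, minDegreeLoc G ≤ minDegreeLoc G' →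
        SeenEvenlyOutside G' K D → ∀ v ∈ K, ¬ Even (G'.neighborSet v ∩ K).ncard →
        minDegreeLoc G ≤ D.ncard - 1 := by
      intro G' hGG' h' v hv hodd
      have hcard : (K \ {v}).ncard = n := by
        rw [Set.ncard_sdiff_singleton_of_mem hv, hn, Nat.add_sub_cancel]
      exact hGG'.trans <| (minDegreeLoc_le_minDegreeLoc_localComp G' v).trans <|
        ih (nonempty_sdiff_singleton_of_not_even_ncard_neighborSet_inter hodd)
          (fun x hx => hKD hx.1) (h'.localComp_sdiff_singleton hKD hv hodd) hcard
    by_cases hsmall : ∃ v ∈ K, G.neighborSet v ⊆ D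
    · obtain ⟨v, hv, hsub⟩ := hsmall
      exact minDegreeLoc_le_ncard_sub_one_of_neighborSet_subset G (hKD hv) hsub
    by_cases hodd : ∃ v ∈ K, ¬ Even (G.neighborSet v ∩ K).ncard
    · obtain ⟨v, hv, hodd⟩ := hodd
      exact remove_odd le_rfl h v hv hodd
    push Not at hsmall hodd
    obtain ⟨v, hv⟩ := hK
    obtain ⟨u, hvu, hu⟩ := Set.not_subset.1 (hsmall v hv)
    refine remove_odd (minDegreeLoc_le_minDegreeLoc_localComp G u)
      (h.localComp_of_notMem hKD hu) v hv ?_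
    rw [even_ncard_localComp_neighborSet_inter_of_mem G (G.adj_symm hvu) hv, not_not]
    exact iff_of_true (hodd v hv) (h u hu)

theorem LocallyEvenlySeen.minDegreeLoc_le [Finite V] {G : SimpleGraph V} {d : ℕ} {K : Set V}
    (h : LocallyEvenlySeen G d K) : minDegreeLoc G ≤ d - 1 := by
  obtain ⟨hK, D, hKD, rfl, hD⟩ := h
  exact minDegreeLoc_le_ncard_sub_one_of_seenEvenlyOutside hK hKD hD

theorem statement_0_general [Fintype V] (G : SimpleGraph V) (d : ℕ)
    (D : Set V) (hne : D.Nonempty) (hD : EvenlySeen G D) (hcard : D.ncard = d) :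
    minDegreeLoc G ≤ d - 1 :=
  LocallyEvenlySeen.minDegreeLoc_le ⟨hne, D, subset_rfl, hcard, hD⟩

/-- If a graph `G` (finite, nonempty vertex set) has a nonempty
evenly seen set `D` with `|D| = d` (where `d ≥ 1`), then `δ_loc(G) ≤ d - 1`. -/
theorem statement_0 [Fintype V] [Nonempty V] (G : SimpleGraph V) (d : ℕ) (hd : 1 ≤ d)
    (D : Set V) (hne : D.Nonempty) (hD : EvenlySeen G D) (hcard : D.ncard = d) :
    minDegreeLoc G ≤ d - 1 :=
  statement_0_general G d D hne hD hcard
end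

section
/- Let d ≥ 1 be an integer, let G = (V, E) be a finite simple graph with nonempty vertex set, and let K be a d-locally evenly seen set of G. Then there exists a sequence of at most 2|K| local complementations transforming G into a graph G' with δ(G') ≤ d − 1. -/
/-!
Induct on `|K|`, keeping the invariant that every vertex outside `D` has an even number of
neighbours in `K`. Pick `v ∈ K`. Complementing at `w` changes the parity of `|N(x) ∩ K|` by
`[w ~ x] (|N(w) ∩ K| + [x ∈ K])`. Hence if `|N(v) ∩ K|` is odd, complementing at `v` keeps the
invariant for `K \ {v}`. If it is even and `v` has a neighbour `u ∉ D`, complementing at `u` keeps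
the invariant and makes `|N(v) ∩ K|` odd. Otherwise `N(v) ⊆ D \ {v}`, so `deg v ≤ |D| - 1`.
Each vertex removed from `K` costs at most two local complementations.
-/

open SimpleGraph

variable {V : Type*}

open scoped symmDiff

theorem Set.cast_ncard_symmDiff {α : Type*} (s t : Set α) (hs : s.Finite := by toFinite_tac)
    (ht : t.Finite := by toFinite_tac) : ((s ∆ t).ncard : ZMod 2) = s.ncard + t.ncard := by
  rw [Set.symmDiff_def, Set.ncard_union_eq disjoint_sdiff_sdiff hs.sdiff ht.sdiff,
    ← Set.ncard_inter_add_ncard_sdiff_eq_ncard s t hs,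
    ← Set.ncard_inter_add_ncard_sdiff_eq_ncard t s ht,
    Set.inter_comm t s]
  push_cast
  grind

open Classical in
theorem Set.cast_ncard_sdiff_singleton {α : Type*} (s : Set α) (a : α)
    (hs : s.Finite := by toFinite_tac) :
    ((s \ {a}).ncard : ZMod 2) = s.ncard + if a ∈ s then 1 else 0 := by
  by_cases ha : a ∈ s
  · rw [← Set.ncard_sdiff_singleton_add_one ha hs, if_pos ha]
    push_cast
    grind
  · rw [Set.sdiff_singleton_eq_self ha, if_neg ha, add_zero]

theorem neighborSet_localComp_of_adj {G : SimpleGraph V} {a w : V} (h : G.Adj a w) :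
    (localComp G a).neighborSet w = G.neighborSet w ∆ (G.neighborSet a \ {w}) := by
  ext x
  simp only [localComp, mem_neighborSet, Set.mem_symmDiff, Set.mem_sdiff, Set.mem_singleton_iff,
    h, true_and, ne_eq]
  grind [G.ne_of_adj]

theorem neighborSet_localComp_of_not_adj {G : SimpleGraph V} {a w : V} (h : ¬ G.Adj a w) :
    (localComp G a).neighborSet w = G.neighborSet w := by
  ext x
  simp only [localComp, mem_neighborSet, h, false_and, ne_eq]
  grind [G.ne_of_adj]

theorem localComp_adj_self_iff {G : SimpleGraph V} {v w : V} :
    (localComp G v).Adj v w ↔ G.Adj v w := by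
  simp only [localComp, ne_eq]
  grind [G.ne_of_adj, G.irrefl]

noncomputable def nbrParity (G : SimpleGraph V) (S : Set V) (w : V) : ZMod 2 :=
  (G.neighborSet w ∩ S).ncard

def EvenlySeenOutside (G : SimpleGraph V) (D K : Set V) : Prop :=
  ∀ w ∉ D, nbrParity G K w = 0

theorem nonempty_sdiff_singleton_of_nbrParity_ne_zero {G : SimpleGraph V} {K : Set V} {v : V}
    (h : nbrParity G K v ≠ 0) : (K \ {v}).Nonempty := by
  obtain ⟨k, hvk, hk⟩ : (G.neighborSet v ∩ K).Nonempty :=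
    Set.nonempty_of_ncard_ne_zero fun h0 => h (by rw [nbrParity, h0, Nat.cast_zero])
  exact ⟨k, hk, (G.ne_of_adj hvk).symm⟩

section

variable [Finite V]

open Classical in
theorem nbrParity_localComp (G : SimpleGraph V) (S : Set V) (a w : V) :
    nbrParity (localComp G a) S w =
      nbrParity G S w + if G.Adj a w then nbrParity G S a + if w ∈ S then 1 else 0 else 0 := by
  by_cases h : G.Adj a w
  · rw [nbrParity, neighborSet_localComp_of_adj h, Set.inter_symmDiff_distrib_right,
      Set.cast_ncard_symmDiff, Set.sdiff_inter_right_comm, Set.cast_ncard_sdiff_singleton]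
    simp [nbrParity, h]
  · simp [nbrParity, neighborSet_localComp_of_not_adj h, h]

open Classical in
theorem nbrParity_sdiff_singleton (G : SimpleGraph V) {S : Set V} {v : V} (hv : v ∈ S) (w : V) :
    nbrParity G (S \ {v}) w = nbrParity G S w + if G.Adj v w then 1 else 0 := by
  rw [nbrParity, ← Set.inter_sdiff_assoc, Set.cast_ncard_sdiff_singleton]
  simp [nbrParity, hv, adj_comm]

theorem minDegree_le_ncard_sub_one {G : SimpleGraph V} {D : Set V} {v : V} (hv : v ∈ D)
    (h : G.neighborSet v ⊆ D) : minDegree G ≤ D.ncard - 1 :=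
  calc minDegree G ≤ (G.neighborSet v).ncard := Nat.sInf_le ⟨v, rfl⟩
    _ ≤ (D \ {v}).ncard :=
      Set.ncard_le_ncard (Set.subset_sdiff_singleton h G.notMem_neighborSet_self)
    _ = D.ncard - 1 := Set.ncard_sdiff_singleton_of_mem hv

variable {G : SimpleGraph V} {D K : Set V}

theorem EvenlySeenOutside.localComp_of_notMem (hG : EvenlySeenOutside G D K) (hKD : K ⊆ D)
    {u : V} (hu : u ∉ D) : EvenlySeenOutside (localComp G u) D K := by
  intro w hw
  rw [nbrParity_localComp, hG w hw, hG u hu, if_neg (fun hwK => hw (hKD hwK))]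
  simp

theorem EvenlySeenOutside.localComp_sdiff_singleton (hG : EvenlySeenOutside G D K)
    (hKD : K ⊆ D) {v : V} (hv : v ∈ K) (hodd : nbrParity G K v = 1) :
    EvenlySeenOutside (localComp G v) D (K \ {v}) := by
  intro w hw
  rw [nbrParity_sdiff_singleton _ hv, nbrParity_localComp, localComp_adj_self_iff, hG w hw, hodd,
    if_neg (fun hwK => hw (hKD hwK))]
  split_ifs <;> decide

theorem EvenlySeenOutside.minDegree_le_or_exists_step (hG : EvenlySeenOutside G D K)
    (hKD : K ⊆ D) {v : V} (hv : v ∈ K) :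
    minDegree G ≤ D.ncard - 1 ∨ ∃ l : List V, l.length ≤ 2 ∧ (K \ {v}).Nonempty ∧
      EvenlySeenOutside (l.foldl localComp G) D (K \ {v}) := by
  obtain h0 | h1 : nbrParity G K v = 0 ∨ nbrParity G K v = 1 :=
    (by decide : ∀ x : ZMod 2, x = 0 ∨ x = 1) _
  · by_cases hN : G.neighborSet v ⊆ D
    · exact .inl (minDegree_le_ncard_sub_one (hKD hv) hN)
    obtain ⟨u, hvu, huD⟩ := Set.not_subset.mp hN
    have hodd : nbrParity (localComp G u) K v = 1 := by
      rw [nbrParity_localComp, h0, hG u huD, if_pos hvu.symm, if_pos hv]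
      decide
    exact .inr ⟨[u, v], le_rfl,
      nonempty_sdiff_singleton_of_nbrParity_ne_zero (hodd ▸ one_ne_zero),
      (hG.localComp_of_notMem hKD huD).localComp_sdiff_singleton hKD hv hodd⟩
  · exact .inr ⟨[v], by simp, nonempty_sdiff_singleton_of_nbrParity_ne_zero (h1 ▸ one_ne_zero),
      hG.localComp_sdiff_singleton hKD hv h1⟩

theorem EvenlySeenOutside.exists_minDegree_le (hG : EvenlySeenOutside G D K) (hKD : K ⊆ D)
    (hK : K.Nonempty) : ∃ l : List V, l.length ≤ 2 * K.ncard ∧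
      minDegree (l.foldl localComp G) ≤ D.ncard - 1 := by
  induction hn : K.ncard using Nat.strong_induction_on generalizing G K with
  | _ n ih =>
    obtain ⟨v, hv⟩ := hK
    rcases hG.minDegree_le_or_exists_step hKD hv with hmin | ⟨l₁, hl₁, hne, hG₁⟩
    · exact ⟨[], by simp, hmin⟩
    have hpos : 0 < n := hn ▸ (Set.ncard_pos K.toFinite).mpr ⟨v, hv⟩
    have hcard : (K \ {v}).ncard = n - 1 := by rw [Set.ncard_sdiff_singleton_of_mem hv, hn]
    obtain ⟨l₂, hl₂, hmin⟩ :=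
      ih (n - 1) (by omega) hG₁ (Set.sdiff_subset.trans hKD) hne hcard
    refine ⟨l₁ ++ l₂, ?_, by rwa [List.foldl_append]⟩
    rw [List.length_append]
    omega

end

theorem statement_2_general [Fintype V] (G : SimpleGraph V) (d : ℕ)
    (K : Set V) (hK : LocallyEvenlySeen G d K) :
    ∃ l : List V, l.length ≤ 2 * K.ncard ∧ minDegree (l.foldl localComp G) ≤ d - 1 := by
  obtain ⟨hne, D, hKD, rfl, hEven⟩ := hK
  have hG : EvenlySeenOutside G D K := fun w hw => ZMod.natCast_eq_zero_iff_even.mpr (hEven w hw)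
  exact hG.exists_minDegree_le hKD hne

/-- If `K` is a `d`-locally evenly seen set of `G` (with `d ≥ 1`),
then there is a sequence of at most `2|K|` local complementations transforming
`G` into a graph `G'` with `δ(G') ≤ d - 1`. -/
theorem statement_2 [Fintype V] [Nonempty V] (G : SimpleGraph V) (d : ℕ) (hd : 1 ≤ d)
    (K : Set V) (hK : LocallyEvenlySeen G d K) :
    ∃ l : List V, l.length ≤ 2 * K.ncard ∧ minDegree (l.foldl localComp G) ≤ d - 1 :=
  statement_2_general G d K hK
end

section
/- For every finite simple graph G, there exists a finite sequence of graph expansions transforming G into a graph G' whose maximum degree satisfies Δ(G') ≤ 3. -/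
open SimpleGraph

/-- The graph expansion of `G` with respect to a vertex `v` and a set
`R ⊆ N_G(v)`: two new vertices `u = Sum.inr 0` and `w = Sum.inr 1` are added,
the edges from `v` to `R` are removed, and the edges `(v,u)`, `(u,w)` and
`(w, v_i)` for `v_i ∈ R` are added. -/
def expand {V : Type} (G : SimpleGraph V) (v : V) (R : Set V) :
    SimpleGraph (V ⊕ Fin 2) where
  Adj x y :=
    match x, y with
    | Sum.inl a, Sum.inl b => G.Adj a b ∧ ¬(a = v ∧ b ∈ R) ∧ ¬(b = v ∧ a ∈ R)
    | Sum.inl a, Sum.inr i => (i = 0 ∧ a = v) ∨ (i = 1 ∧ a ∈ R)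
    | Sum.inr i, Sum.inl a => (i = 0 ∧ a = v) ∨ (i = 1 ∧ a ∈ R)
    | Sum.inr i, Sum.inr j => i ≠ j
  symm := by
    constructor
    rintro (a | i) (b | j) h
    · exact ⟨G.adj_symm h.1, h.2.2, h.2.1⟩
    · exact h
    · exact h
    · exact h.symm
  loopless := by
    constructor
    rintro (a | i) h
    · exact G.irrefl h.1
    · exact h rfl

/-- A finite simple graph, bundled with its (finite) vertex type. -/
structure FinSimpleGraph where
  V : Type
  fin : Fintype V
  G : SimpleGraph V

/-- `H'` is obtained from `H` by a single graph expansion (with respect to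
some vertex `v` and some set `R` of neighbors of `v`). -/
def ExpansionStep (H H' : FinSimpleGraph) : Prop :=
  ∃ (v : H.V) (R : Set H.V), R ⊆ H.G.neighborSet v ∧
    Nonempty (H'.G ≃g expand H.G v R)

/-!
Measure a graph by its degree excess `∑ₐ (deg a - 3)`. If some vertex `v` has degree `d ≥ 4`,
expand at `v` with a set `R` of `d - 2` of its neighbours: `v` drops to degree 3, the new
vertices get degrees 2 and `d - 1`, and all other degrees are unchanged, so the excess drops
by exactly one. Induction on the excess finishes the proof.
-/

namespace SimpleGraph
variable {V : Type} (G : SimpleGraph V) (v : V) (R : Set V)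

lemma expand_neighborSet_inl_of_ne {a : V} (hav : a ≠ v) (haR : a ∉ R) :
    (expand G v R).neighborSet (.inl a) = .inl '' G.neighborSet a := by
  ext (b | i) <;> simp [expand, hav, haR]

lemma expand_neighborSet_inl_of_mem {a : V} (hav : a ≠ v) (haR : a ∈ R) :
    (expand G v R).neighborSet (.inl a) =
      insert (.inr 1) (.inl '' (G.neighborSet a \ {v})) := by
  ext (b | i) <;> simp [expand, hav, haR]

lemma expand_neighborSet_inl_self (hvR : v ∉ R) :
    (expand G v R).neighborSet (.inl v) = insert (.inr 0) (.inl '' (G.neighborSet v \ R)) := by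
  ext (b | i) <;> simp [expand, hvR]

lemma expand_neighborSet_inr_zero :
    (expand G v R).neighborSet (.inr 0) = {.inl v, .inr 1} := by
  ext (b | i)
  · simp [expand]
  · simp [expand]; omega

lemma expand_neighborSet_inr_one :
    (expand G v R).neighborSet (.inr 1) = insert (.inr 0) (.inl '' R) := by
  ext (b | i)
  · simp [expand]
  · simp [expand]; omega

variable {G v R}

lemma ncard_neighborSet_expand_inr_zero :
    ((expand G v R).neighborSet (.inr 0)).ncard = 2 := by
  rw [expand_neighborSet_inr_zero, Set.ncard_pair (by simp)]

section Finite
variable [Finite V]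

lemma ncard_neighborSet_expand_inl_of_ne (hR : R ⊆ G.neighborSet v) {a : V} (hav : a ≠ v) :
    ((expand G v R).neighborSet (.inl a)).ncard = (G.neighborSet a).ncard := by
  by_cases haR : a ∈ R
  · rw [expand_neighborSet_inl_of_mem G v R hav haR, Set.ncard_insert_of_notMem (by simp),
      Set.ncard_image_of_injective _ Sum.inl_injective]
    exact Set.ncard_sdiff_singleton_add_one (G.adj_symm (hR haR))
  · rw [expand_neighborSet_inl_of_ne G v R hav haR,
      Set.ncard_image_of_injective _ Sum.inl_injective]

lemma ncard_neighborSet_expand_inl_self (hR : R ⊆ G.neighborSet v) :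
    ((expand G v R).neighborSet (.inl v)).ncard = (G.neighborSet v).ncard - R.ncard + 1 := by
  rw [expand_neighborSet_inl_self G v R fun hv => G.loopless.irrefl v (hR hv),
    Set.ncard_insert_of_notMem (by simp), Set.ncard_image_of_injective _ Sum.inl_injective,
    Set.ncard_sdiff hR]

lemma ncard_neighborSet_expand_inr_one :
    ((expand G v R).neighborSet (.inr 1)).ncard = R.ncard + 1 := by
  rw [expand_neighborSet_inr_one, Set.ncard_insert_of_notMem (by simp),
    Set.ncard_image_of_injective _ Sum.inl_injective]

end Finite

-- Truncated subtraction: vertices of degree at most 3 contribute nothing.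
noncomputable def degreeExcess [Fintype V] (G : SimpleGraph V) : ℕ :=
  ∑ a, ((G.neighborSet a).ncard - 3)

lemma degreeExcess_expand_add_one [Fintype V] (hR : R ⊆ G.neighborSet v)
    (hv : 4 ≤ (G.neighborSet v).ncard) (hRcard : R.ncard = (G.neighborSet v).ncard - 2) :
    (expand G v R).degreeExcess + 1 = G.degreeExcess := by
  classical
  have hold : ∀ a ∈ Finset.univ.erase v,
      ((expand G v R).neighborSet (.inl a)).ncard - 3 = (G.neighborSet a).ncard - 3 :=
    fun a ha => by rw [ncard_neighborSet_expand_inl_of_ne hR (Finset.ne_of_mem_erase ha)]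
  rw [degreeExcess, degreeExcess, Fintype.sum_sum_type, Fin.sum_univ_two,
    ncard_neighborSet_expand_inr_zero, ncard_neighborSet_expand_inr_one,
    ← Finset.add_sum_erase _ _ (Finset.mem_univ v), Finset.sum_congr rfl hold,
    ← Finset.add_sum_erase _ _ (Finset.mem_univ v),
    ncard_neighborSet_expand_inl_self hR]
  omega

end SimpleGraph

/-- every finite simple graph can be transformed by a finite
sequence of graph expansions into a graph of maximum degree at most 3. -/
theorem statement_15 (V : Type) [Fintype V] (G : SimpleGraph V) :
    ∃ H' : FinSimpleGraph,
      Relation.ReflTransGen ExpansionStep ⟨V, ‹Fintype V›, G⟩ H' ∧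
        ∀ v : H'.V, (H'.G.neighborSet v).ncard ≤ 3 := by
  induction hn : G.degreeExcess using Nat.strong_induction_on generalizing V with
  | _ n ih =>
    by_cases hmax : ∀ v, (G.neighborSet v).ncard ≤ 3
    · exact ⟨_, .refl, hmax⟩
    push Not at hmax
    obtain ⟨v, hv⟩ := hmax
    obtain ⟨R, hR, hRcard⟩ := Set.exists_subset_card_eq (Nat.sub_le (G.neighborSet v).ncard 2)
    have hexcess := degreeExcess_expand_add_one hR hv hRcard
    obtain ⟨H', hH', hdeg⟩ := ih _ (by omega) (V ⊕ Fin 2) (expand G v R) rfl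
    exact ⟨H', .head ⟨v, R, hR, ⟨Iso.refl⟩⟩ hH', hdeg⟩
end
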